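/- If an n-counter Minsky machine M can go from the initial configuration (L₁, k₁, …, kₙ) to the halting configuration (L₀, 0, …, 0), then there is a tree-like Horn program P, with all edge-formulas drawn from Φ_M ∪ 𝒦, that is a strong solution to the sequent l₁ ⊗ r₁^{k₁} ⊗ ⋯ ⊗ rₙ^{kₙ}, !Φ_M, !𝒦 ⊢ l₀. -/

import Mathlib

/-- Simple products of positive literals over `α`, represented as multisets of literals. -/
abbrev SP (α : Type) := Multiset α

/-- Horn implications `X ⊸ Y` and ⊕-Horn implications `X ⊸ (Y₁ ⊕ Y₂)`
over simple products. -/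
inductive HF (α : Type) : Type
  | horn : SP α → SP α → HF α
  | ohorn : SP α → SP α → SP α → HF α

instance {α : Type} [DecidableEq α] : DecidableEq (HF α)
  | HF.horn a b, HF.horn c d =>
      decidable_of_iff (a = c ∧ b = d) (by simp [HF.horn.injEq])
  | HF.horn _ _, HF.ohorn _ _ _ => isFalse (by simp)
  | HF.ohorn _ _ _, HF.horn _ _ => isFalse (by simp)
  | HF.ohorn a b c, HF.ohorn d e f =>
      decidable_of_iff (a = d ∧ b = e ∧ c = f) (by simp [HF.ohorn.injEq])

/-- Tree-like Horn programs: rooted binary trees whose edges are labelled by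
Horn implications; a divergent vertex carries two Horn implications with a
common antecedent `X` (coming from the ⊕-Horn implication `X ⊸ (Y₁ ⊕ Y₂)`). -/
inductive HT (α : Type) : Type
  | leaf : HT α
  | node1 : SP α → SP α → HT α → HT α
  | node2 : SP α → SP α → SP α → HT α → HT α → HT α

/-- `Sol P W Δ Γ Z`: the tree-like Horn program `P` is a strong solution to the
Horn sequent `W, Δ, !Γ ⊢ Z`: every strong-computation value is defined, every
leaf value equals `Z` (as a multiset), every formula used on an edge is drawn
from `Δ` or `Γ`, and on each root-to-leaf path each formula of the linear part
`Δ` is used exactly once (the formula used on the two edges of a divergent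
vertex being the ⊕-Horn implication `X ⊸ (Y₁ ⊕ Y₂)`). -/
def Sol {α : Type} [DecidableEq α] :
    HT α → SP α → Multiset (HF α) → Multiset (HF α) → SP α → Prop
  | HT.leaf, W, Δ, _, Z => W = Z ∧ Δ = 0
  | HT.node1 X Y t, W, Δ, Γ, Z =>
      X ≠ 0 ∧ Y ≠ 0 ∧ X ≤ W ∧
      ((HF.horn X Y ∈ Δ ∧ Sol t (W - X + Y) (Δ.erase (HF.horn X Y)) Γ Z) ∨
       (HF.horn X Y ∈ Γ ∧ Sol t (W - X + Y) Δ Γ Z))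
  | HT.node2 X Y₁ Y₂ t₁ t₂, W, Δ, Γ, Z =>
      X ≠ 0 ∧ Y₁ ≠ 0 ∧ Y₂ ≠ 0 ∧ X ≤ W ∧
      ((HF.ohorn X Y₁ Y₂ ∈ Δ ∧
          Sol t₁ (W - X + Y₁) (Δ.erase (HF.ohorn X Y₁ Y₂)) Γ Z ∧
          Sol t₂ (W - X + Y₂) (Δ.erase (HF.ohorn X Y₁ Y₂)) Γ Z) ∨
       (HF.ohorn X Y₁ Y₂ ∈ Γ ∧
          Sol t₁ (W - X + Y₁) Δ Γ Z ∧
          Sol t₂ (W - X + Y₂) Δ Γ Z))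

/-- The strong-computation value `OUT(P, W, v)` at the vertex addressed by the
path `p` (at a divergent vertex, `false` selects the first child and `true`
the second; a non-divergent vertex is descended by `false`).  `none` means
undefined. -/
def OUT {α : Type} [DecidableEq α] :
    HT α → SP α → List Bool → Option (SP α)
  | _, W, [] => some W
  | HT.leaf, _, _ :: _ => none
  | HT.node1 X Y t, W, false :: p =>
      if X ≤ W then OUT t (W - X + Y) p else none
  | HT.node1 _ _ _, _, true :: _ => none
  | HT.node2 X Y₁ _ t₁ _, W, false :: p =>
      if X ≤ W then OUT t₁ (W - X + Y₁) p else none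
  | HT.node2 X _ Y₂ _ t₂, W, true :: p =>
      if X ≤ W then OUT t₂ (W - X + Y₂) p else none

/-- Literals of the Minsky encoding: `lab i` for the label `Lᵢ`, `reg m` for
the `m`-th counter, and `kap m` for the killer literal `κₘ`. -/
inductive Lit (n : ℕ) : Type
  | lab : ℕ → Lit n
  | reg : Fin n → Lit n
  | kap : Fin n → Lit n
deriving DecidableEq

/-- Instructions of an `n`-counter Minsky machine:
`inc i m j` is `Lᵢ: xₘ := xₘ + 1; goto Lⱼ`,
`dec i m j` is `Lᵢ: xₘ := xₘ - 1; goto Lⱼ`,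
`pos i m j` is `Lᵢ: if xₘ > 0 then goto Lⱼ`,
`zero i m j` is `Lᵢ: if xₘ = 0 then goto Lⱼ`
(the halt instruction is `L₀: halt`, i.e. label `0` carries no instruction). -/
inductive Instr (n : ℕ) : Type
  | inc : ℕ → Fin n → ℕ → Instr n
  | dec : ℕ → Fin n → ℕ → Instr n
  | pos : ℕ → Fin n → ℕ → Instr n
  | zero : ℕ → Fin n → ℕ → Instr n
deriving DecidableEq

/-- The source label of an instruction. -/
def Instr.src {n : ℕ} : Instr n → ℕ
  | Instr.inc i _ _ => i
  | Instr.dec i _ _ => i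
  | Instr.pos i _ _ => i
  | Instr.zero i _ _ => i

/-- A configuration: the current label together with the counter contents. -/
abbrev Config (n : ℕ) := ℕ × (Fin n → ℕ)

/-- One move of the Minsky machine with program `M`. -/
inductive MStep {n : ℕ} (M : List (Instr n)) : Config n → Config n → Prop
  | inc {i : ℕ} {m : Fin n} {j : ℕ} {c : Fin n → ℕ} :
      Instr.inc i m j ∈ M → MStep M (i, c) (j, Function.update c m (c m + 1))
  | dec {i : ℕ} {m : Fin n} {j : ℕ} {c : Fin n → ℕ} :
      Instr.dec i m j ∈ M → 0 < c m →
      MStep M (i, c) (j, Function.update c m (c m - 1))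
  | pos {i : ℕ} {m : Fin n} {j : ℕ} {c : Fin n → ℕ} :
      Instr.pos i m j ∈ M → 0 < c m → MStep M (i, c) (j, c)
  | zero {i : ℕ} {m : Fin n} {j : ℕ} {c : Fin n → ℕ} :
      Instr.zero i m j ∈ M → c m = 0 → MStep M (i, c) (j, c)

/-- `M` can go from one configuration to another (by a finite computation). -/
def Reaches {n : ℕ} (M : List (Instr n)) : Config n → Config n → Prop :=
  Relation.ReflTransGen (MStep M)

/-- The encoding of a configuration `(L, c₁, …, cₙ)` as the multiset of
literals `{l} ∪ {r₁ repeated c₁ times} ∪ … ∪ {rₙ repeated cₙ times}`. -/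
def encC {n : ℕ} (K : Config n) : Multiset (Lit n) :=
  Lit.lab K.1 ::ₘ (Finset.univ.sum fun m : Fin n =>
    Multiset.replicate (K.2 m) (Lit.reg m))

/-- The (⊕-)Horn implication `φ_I` axiomatizing an instruction `I`:
`φ₍₁₎ = lᵢ ⊸ (lⱼ ⊗ rₘ)`, `φ₍₂₎ = (lᵢ ⊗ rₘ) ⊸ lⱼ`,
`φ₍₃₎ = (lᵢ ⊗ rₘ) ⊸ (lⱼ ⊗ rₘ)`, `φ₍₄₎ = lᵢ ⊸ (lⱼ ⊕ κₘ)`. -/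
def phiHF {n : ℕ} : Instr n → HF (Lit n)
  | Instr.inc i m j => HF.horn {Lit.lab i} {Lit.lab j, Lit.reg m}
  | Instr.dec i m j => HF.horn {Lit.lab i, Lit.reg m} {Lit.lab j}
  | Instr.pos i m j => HF.horn {Lit.lab i, Lit.reg m} {Lit.lab j, Lit.reg m}
  | Instr.zero i m j => HF.ohorn {Lit.lab i} {Lit.lab j} {Lit.kap m}

/-- The multiset `Φ_M` of Horn implications axiomatizing the program of `M`. -/
def PhiHF {n : ℕ} (M : List (Instr n)) : Multiset (HF (Lit n)) :=
  (M.map phiHF : List (HF (Lit n)))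

/-- The multiset `𝒦ₘ`: the implication `κₘ ⊸ l₀` together with the killing
implications `(κₘ ⊗ rᵢ) ⊸ κₘ` for `i ≠ m`. -/
def KHFm {n : ℕ} (m : Fin n) : Multiset (HF (Lit n)) :=
  HF.horn {Lit.kap m} {Lit.lab 0} ::ₘ
    ((Finset.univ.erase m).val.map fun i : Fin n =>
      HF.horn {Lit.kap m, Lit.reg i} {Lit.kap m})

/-- The multiset `𝒦 = ⋃ₘ 𝒦ₘ`. -/
def KHF (n : ℕ) : Multiset (HF (Lit n)) :=
  Finset.univ.sum fun m : Fin n => KHFm m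

section Aux

variable {n : ℕ}

/-- The register part of an encoded configuration. -/
def regs (c : Fin n → ℕ) : Multiset (Lit n) :=
  Finset.univ.sum fun m : Fin n => Multiset.replicate (c m) (Lit.reg m)

lemma encC_eq (i : ℕ) (c : Fin n → ℕ) : encC (i, c) = Lit.lab i ::ₘ regs c := rfl

lemma regs_split (c : Fin n → ℕ) (m : Fin n) :
    regs c = Multiset.replicate (c m) (Lit.reg m) +
      ∑ i ∈ Finset.univ.erase m, Multiset.replicate (c i) (Lit.reg i) := by
  rw [regs, ← Finset.add_sum_erase _ _ (Finset.mem_univ m)]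

lemma regs_update (c : Fin n → ℕ) (m : Fin n) (v : ℕ) :
    regs (Function.update c m v) =
      Multiset.replicate v (Lit.reg m) +
        ∑ i ∈ Finset.univ.erase m, Multiset.replicate (c i) (Lit.reg i) := by
  rw [regs_split _ m, Function.update_self]
  congr 1
  refine Finset.sum_congr rfl fun i hi => ?_
  rw [Function.update_of_ne (Finset.ne_of_mem_erase hi)]

lemma regs_update_succ (c : Fin n → ℕ) (m : Fin n) :
    regs (Function.update c m (c m + 1)) = Lit.reg m ::ₘ regs c := by
  rw [regs_update, regs_split c m, Multiset.replicate_succ, Multiset.cons_add]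

lemma regs_update_pred (c : Fin n → ℕ) (m : Fin n) (hc : 0 < c m) :
    regs c = Lit.reg m ::ₘ regs (Function.update c m (c m - 1)) := by
  rw [regs_update, regs_split c m, ← Multiset.cons_add, ← Multiset.replicate_succ]
  congr 2
  omega

lemma mem_regs (c : Fin n → ℕ) (x : Lit n) (hx : x ∈ regs c) :
    ∃ i : Fin n, x = Lit.reg i ∧ 0 < c i := by
  rw [regs, Multiset.mem_sum] at hx
  obtain ⟨i, -, hi⟩ := hx
  rw [Multiset.eq_of_mem_replicate hi]
  exact ⟨i, rfl, by
    rcases Nat.eq_zero_or_pos (c i) with h | h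
    · simp [h, Multiset.replicate_zero] at hi
    · exact h⟩

lemma KHFm_le_KHF (m : Fin n) : KHFm m ≤ KHF n :=
  Finset.single_le_sum (f := fun m : Fin n => KHFm m)
    (fun i _ => zero_le) (Finset.mem_univ m)

lemma cons_sub_cons' (a : Lit n) (s t : Multiset (Lit n)) :
    (a ::ₘ s) - (a ::ₘ t) = s - t := by
  rw [Multiset.sub_cons, Multiset.erase_cons_head]

lemma pair_ne_zero (a b : Lit n) : ({a, b} : Multiset (Lit n)) ≠ 0 := by
  simp [Multiset.insert_eq_cons]

lemma single_ne_zero (a : Lit n) : ({a} : Multiset (Lit n)) ≠ 0 := by simp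

/-- The killing phase: from `κₘ` together with registers `≠ m`,
reach `l₀`. -/
lemma kill (m : Fin n) (Γ : Multiset (HF (Lit n))) (hΓ : KHFm m ≤ Γ)
    (R : Multiset (Lit n)) (hR : ∀ x ∈ R, ∃ i : Fin n, i ≠ m ∧ x = Lit.reg i) :
    ∃ P : HT (Lit n), Sol P (Lit.kap m ::ₘ R) 0 Γ {Lit.lab 0} := by
  induction R using Multiset.induction with
  | empty =>
      refine ⟨HT.node1 {Lit.kap m} {Lit.lab 0} HT.leaf,
        single_ne_zero _, single_ne_zero _, ?_, Or.inr ⟨?_, ?_, rfl⟩⟩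
      · simp
      · exact Multiset.mem_of_le hΓ (Multiset.mem_cons_self _ _)
      · show (Lit.kap m ::ₘ 0) - {Lit.kap m} + {Lit.lab 0} = {Lit.lab 0}
        simp [Multiset.sub_singleton]
  | cons x R ih =>
      obtain ⟨i, him, hxi⟩ := hR x (Multiset.mem_cons_self _ _)
      subst hxi
      obtain ⟨P, hP⟩ := ih fun y hy => hR y (Multiset.mem_cons_of_mem hy)
      refine ⟨HT.node1 {Lit.kap m, Lit.reg i} {Lit.kap m} P,
        pair_ne_zero _ _, single_ne_zero _, ?_, Or.inr ⟨?_, ?_⟩⟩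
      · rw [Multiset.insert_eq_cons]
        exact Multiset.cons_le_cons _ (by simp)
      · refine Multiset.mem_of_le hΓ (Multiset.mem_cons_of_mem ?_)
        exact Multiset.mem_map.2 ⟨i, by simp [Multiset.mem_erase_of_ne him], rfl⟩
      · have : (Lit.kap m ::ₘ Lit.reg i ::ₘ R) - {Lit.kap m, Lit.reg i} +
            {Lit.kap m} = Lit.kap m ::ₘ R := by
          rw [Multiset.insert_eq_cons, cons_sub_cons',
            Multiset.sub_singleton, Multiset.erase_cons_head]
          rw [add_comm]
          rfl
        rwa [this]

lemma main_lemma (M : List (Instr n)) (K : Config n)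
    (h : Reaches M K (0, fun _ => 0)) :
    ∃ P : HT (Lit n), Sol P (encC K) 0 (PhiHF M + KHF n) {Lit.lab 0} := by
  induction h using Relation.ReflTransGen.head_induction_on with
  | refl =>
      refine ⟨HT.leaf, ?_, rfl⟩
      show encC (0, fun _ => 0) = {Lit.lab 0}
      rw [encC_eq]
      simp [regs]
  | head hstep _ ih =>
      obtain ⟨P, hP⟩ := ih
      cases hstep with
      | @inc i m j c hI =>
          have hmem : phiHF (Instr.inc i m j) ∈ PhiHF M + KHF n :=
            Multiset.mem_add.2 (Or.inl (Multiset.mem_coe.2 (List.mem_map_of_mem hI)))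
          refine ⟨HT.node1 {Lit.lab i} {Lit.lab j, Lit.reg m} P,
            single_ne_zero _, pair_ne_zero _ _, by simp [encC_eq], Or.inr ⟨hmem, ?_⟩⟩
          have : encC (i, c) - {Lit.lab i} + {Lit.lab j, Lit.reg m} =
              encC (j, Function.update c m (c m + 1)) := by
            rw [encC_eq, encC_eq, Multiset.sub_singleton, Multiset.erase_cons_head,
              regs_update_succ, Multiset.insert_eq_cons, add_comm,
              Multiset.cons_add, Multiset.singleton_add]
          rwa [this]
      | @dec i m j c hI hc =>
          have hmem : phiHF (Instr.dec i m j) ∈ PhiHF M + KHF n :=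
            Multiset.mem_add.2 (Or.inl (Multiset.mem_coe.2 (List.mem_map_of_mem hI)))
          have hW : encC (i, c) =
              Lit.lab i ::ₘ Lit.reg m ::ₘ regs (Function.update c m (c m - 1)) := by
            rw [encC_eq, regs_update_pred c m hc]
          refine ⟨HT.node1 {Lit.lab i, Lit.reg m} {Lit.lab j} P,
            pair_ne_zero _ _, single_ne_zero _, ?_, Or.inr ⟨hmem, ?_⟩⟩
          · rw [hW, Multiset.insert_eq_cons]
            exact Multiset.cons_le_cons _ (by simp)
          · have : encC (i, c) - {Lit.lab i, Lit.reg m} + {Lit.lab j} =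
                encC (j, Function.update c m (c m - 1)) := by
              rw [hW, encC_eq, Multiset.insert_eq_cons, cons_sub_cons',
                Multiset.sub_singleton, Multiset.erase_cons_head, add_comm,
                Multiset.singleton_add]
            rwa [this]
      | @pos i m j c hI hc =>
          have hmem : phiHF (Instr.pos i m j) ∈ PhiHF M + KHF n :=
            Multiset.mem_add.2 (Or.inl (Multiset.mem_coe.2 (List.mem_map_of_mem hI)))
          have hW : encC (i, c) =
              Lit.lab i ::ₘ Lit.reg m ::ₘ regs (Function.update c m (c m - 1)) := by
            rw [encC_eq, regs_update_pred c m hc]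
          refine ⟨HT.node1 {Lit.lab i, Lit.reg m} {Lit.lab j, Lit.reg m} P,
            pair_ne_zero _ _, pair_ne_zero _ _, ?_, Or.inr ⟨hmem, ?_⟩⟩
          · rw [hW, Multiset.insert_eq_cons]
            exact Multiset.cons_le_cons _ (by simp)
          · have : encC (i, c) - {Lit.lab i, Lit.reg m} + {Lit.lab j, Lit.reg m} =
                encC (j, c) := by
              rw [hW, encC_eq, Multiset.insert_eq_cons, Multiset.insert_eq_cons,
                cons_sub_cons', Multiset.sub_singleton, Multiset.erase_cons_head,
                add_comm, Multiset.cons_add, Multiset.singleton_add,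
                regs_update_pred c m hc]
            rwa [this]
      | @zero i m j c hI hc =>
          have hmem : phiHF (Instr.zero i m j) ∈ PhiHF M + KHF n :=
            Multiset.mem_add.2 (Or.inl (Multiset.mem_coe.2 (List.mem_map_of_mem hI)))
          have hsub : encC (i, c) - {Lit.lab i} = regs c := by
            rw [encC_eq, Multiset.sub_singleton, Multiset.erase_cons_head]
          obtain ⟨Q, hQ⟩ := kill m (PhiHF M + KHF n)
            (le_trans (KHFm_le_KHF m) (le_add_self)) (regs c)
            (fun x hx => by
              obtain ⟨i', hx', hc'⟩ := mem_regs c x hx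
              exact ⟨i', fun him => by subst him; omega, hx'⟩)
          refine ⟨HT.node2 {Lit.lab i} {Lit.lab j} {Lit.kap m} P Q,
            single_ne_zero _, single_ne_zero _, single_ne_zero _, by simp [encC_eq],
            Or.inr ⟨hmem, ?_, ?_⟩⟩
          · have : encC (i, c) - {Lit.lab i} + {Lit.lab j} = encC (j, c) := by
              rw [hsub, encC_eq, add_comm, Multiset.singleton_add]
            rwa [this]
          · have : encC (i, c) - {Lit.lab i} + {Lit.kap m} = Lit.kap m ::ₘ regs c := by
              rw [hsub, add_comm, Multiset.singleton_add]
            rwa [this]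

end Aux

/-- if the `n`-counter Minsky machine `M` can go from the
initial configuration `(L₁, k₁, …, kₙ)` to the halting configuration
`(L₀, 0, …, 0)`, then there is a tree-like Horn program, with all
edge-formulas drawn from `Φ_M ∪ 𝒦`, that is a strong solution to the sequent
`l₁ ⊗ r₁^{k₁} ⊗ ⋯ ⊗ rₙ^{kₙ}, !Φ_M, !𝒦 ⊢ l₀`. -/
theorem computation_to_program {n : ℕ} (M : List (Instr n)) (k : Fin n → ℕ)
    (h : Reaches M (1, k) (0, fun _ => 0)) :
    ∃ P : HT (Lit n),
      Sol P (encC (1, k)) 0 (PhiHF M + KHF n) {Lit.lab 0} := by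
  exact main_lemma M (1, k) h
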